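/- arXiv:2512.03291 — 3 statements merged into one kernel-verified Lean document; each statement's English description precedes it below -/
import Mathlib

section
/- Let α ∈ (1/2, 1), λ ≥ 2, and set s_{KN} ∈ [λ^{-1/2}, 1]. Then the dyadic sum Σ_{k : λ^{-1/2} ≤ 2^k ≤ C} 2^{k(1/2 - α)} λ^{-α/2} min(1, (2^k λ^{1/2} s_{KN})^{1/2}) is bounded by C' λ^{-1/4} s_{KN}^{α - 1/2}, where C' depends only on α and C. Moreover, when α = 1 the same sum is bounded by C' λ^{-1/4} s_{KN}^{1/2} log λ. -/
open MeasureTheory Set Finset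

private lemma kn_geomA (ρ : ℝ) (hρ : 1 < ρ) (x : ℝ) (K : Finset ℤ) (h : ∀ k ∈ K, (k:ℝ) ≤ x) :
    ∑ k ∈ K, ρ ^ (k:ℝ) ≤ ρ ^ x * (ρ/(ρ-1)) := by
  have hρ0 : (0:ℝ) < ρ := lt_trans one_pos hρ
  set N : ℤ := ⌊x⌋
  have hkN : ∀ k ∈ K, k ≤ N := fun k hk => Int.le_floor.mpr (h k hk)
  have hstep : ∀ k ∈ K, ρ ^ (k:ℝ) = ρ ^ (N:ℝ) * (ρ⁻¹) ^ ((N - k).toNat) := by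
    intro k hk
    have h0 : (0:ℤ) ≤ N - k := by have := hkN k hk; omega
    have h1 : ((N - k).toNat : ℝ) = (N:ℝ) - (k:ℝ) := by
      rw [show ((N - k).toNat : ℝ) = (((N - k).toNat : ℤ) : ℝ) by push_cast; ring,
        Int.toNat_of_nonneg h0]; push_cast; ring
    rw [← Real.rpow_natCast ρ⁻¹, ← Real.rpow_neg_one ρ, ← Real.rpow_mul hρ0.le, h1,
      ← Real.rpow_add hρ0]
    ring_nf
  rw [Finset.sum_congr rfl hstep, ← Finset.mul_sum]
  have hinj : Set.InjOn (fun k : ℤ => (N - k).toNat) K := by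
    intro a ha b hb hab
    have := hkN a ha; have := hkN b hb
    simp only at hab; omega
  have h2 : ∑ k ∈ K, (ρ⁻¹) ^ ((N - k).toNat) = ∑ j ∈ K.image (fun k => (N - k).toNat), (ρ⁻¹) ^ j := by
    rw [Finset.sum_image (fun a ha b hb => hinj ha hb)]
  have hlt : ρ⁻¹ < 1 := inv_lt_one_of_one_lt₀ hρ
  have h3 : ∑ j ∈ K.image (fun k => (N - k).toNat), (ρ⁻¹) ^ j ≤ (1 - ρ⁻¹)⁻¹ := by
    have := tsum_geometric_of_lt_one (by positivity) hlt
    calc ∑ j ∈ K.image (fun k => (N - k).toNat), (ρ⁻¹) ^ j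
        ≤ ∑' j : ℕ, (ρ⁻¹) ^ j := Summable.sum_le_tsum _ (fun _ _ => by positivity)
          (summable_geometric_of_lt_one (by positivity) hlt)
      _ = (1 - ρ⁻¹)⁻¹ := this
  have h4 : (1 - ρ⁻¹)⁻¹ = ρ/(ρ-1) := by
    field_simp
  calc ρ ^ (N:ℝ) * ∑ k ∈ K, (ρ⁻¹) ^ ((N - k).toNat)
      ≤ ρ ^ (N:ℝ) * (1 - ρ⁻¹)⁻¹ := by
        apply mul_le_mul_of_nonneg_left (h2 ▸ h3) (by positivity)
    _ ≤ ρ ^ x * (ρ/(ρ-1)) := by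
        rw [h4]
        apply mul_le_mul_of_nonneg_right _ (div_nonneg hρ0.le (by linarith))
        exact Real.rpow_le_rpow_of_exponent_le hρ.le (Int.floor_le x)

private lemma kn_geomB (ρ : ℝ) (hρ : 1 < ρ) (y : ℝ) (K : Finset ℤ) (h : ∀ k ∈ K, y ≤ (k:ℝ)) :
    ∑ k ∈ K, ρ ^ (-(k:ℝ)) ≤ ρ ^ (-y) * (ρ/(ρ-1)) := by
  have : ∑ k ∈ K, ρ ^ (-(k:ℝ)) = ∑ k ∈ K.image (fun k => -k), ρ ^ ((k:ℝ)) := by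
    rw [Finset.sum_image (by intro a _ b _ h; simp only at h; omega)]
    apply Finset.sum_congr rfl; intro k _; push_cast; ring_nf
  rw [this]
  apply kn_geomA ρ hρ (-y)
  intro k hk
  simp only [Finset.mem_image] at hk
  obtain ⟨a, ha, rfl⟩ := hk
  have := h a ha; push_cast; linarith

private lemma kn_min_rpow (y θ : ℝ) (hy : 0 < y) (hθ0 : 0 ≤ θ) (hθ1 : θ ≤ 1) :
    min 1 (y ^ ((1:ℝ)/2)) ≤ y ^ (θ/2) := by
  rcases le_total y 1 with h | h
  · calc min 1 (y ^ ((1:ℝ)/2)) ≤ y ^ ((1:ℝ)/2) := min_le_right _ _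
      _ ≤ y ^ (θ/2) := Real.rpow_le_rpow_of_exponent_ge hy h (by linarith)
  · calc min 1 (y ^ ((1:ℝ)/2)) ≤ 1 := min_le_left _ _
      _ ≤ y ^ (θ/2) := Real.one_le_rpow h (by linarith)

private lemma kn_term_bound (lam s : ℝ) (hlam : 0 < lam) (hs : 0 < s) (θ α : ℝ)
    (hθ0 : 0 ≤ θ) (hθ1 : θ ≤ 1) (k : ℤ) :
    (2:ℝ) ^ ((k : ℝ) * (1/2 - α)) * lam ^ (-α/2) *
        min 1 (((2:ℝ) ^ (k : ℝ) * lam ^ ((1:ℝ)/2) * s) ^ ((1:ℝ)/2))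
      ≤ (2:ℝ) ^ ((k:ℝ) * (1/2 - α + θ/2)) * lam ^ ((θ - 2*α)/4) * s ^ (θ/2) := by
  have h2 : (0:ℝ) < 2 := two_pos
  have hy : (0:ℝ) < (2:ℝ) ^ (k:ℝ) * lam ^ ((1:ℝ)/2) * s := by positivity
  have h1 := kn_min_rpow _ θ hy hθ0 hθ1
  calc (2:ℝ) ^ ((k : ℝ) * (1/2 - α)) * lam ^ (-α/2) *
        min 1 (((2:ℝ) ^ (k : ℝ) * lam ^ ((1:ℝ)/2) * s) ^ ((1:ℝ)/2))
      ≤ (2:ℝ) ^ ((k : ℝ) * (1/2 - α)) * lam ^ (-α/2) *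
        (((2:ℝ) ^ (k : ℝ) * lam ^ ((1:ℝ)/2) * s) ^ (θ/2)) := by
        apply mul_le_mul_of_nonneg_left h1 (by positivity)
    _ = (2:ℝ) ^ ((k:ℝ) * (1/2 - α + θ/2)) * lam ^ ((θ - 2*α)/4) * s ^ (θ/2) := by
        rw [Real.mul_rpow (by positivity) hs.le, Real.mul_rpow (by positivity) (by positivity),
          ← Real.rpow_mul h2.le, ← Real.rpow_mul hlam.le]
        rw [show (k:ℝ) * (1/2 - α + θ/2) = (k:ℝ) * (1/2 - α) + (k:ℝ) * (θ/2) by ring,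
          show (θ - 2*α)/4 = -α/2 + 1/2 * (θ/2) by ring,
          Real.rpow_add h2, Real.rpow_add hlam]
        ring

/-- Dyadic summation lemma for the Kakeya–Nikodym bound. -/
theorem stmt9 (C : ℝ) (hC : 1 ≤ C) (α : ℝ) (hα0 : 1/2 < α) (hα1 : α < 1) :
    (∃ C' : ℝ, 0 < C' ∧ ∀ (lam s : ℝ) (K : Finset ℤ), 2 ≤ lam →
      lam ^ (-(1:ℝ)/2) ≤ s → s ≤ 1 →
      (∀ k ∈ K, lam ^ (-(1:ℝ)/2) ≤ (2:ℝ) ^ (k : ℝ) ∧ (2:ℝ) ^ (k : ℝ) ≤ C) →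
      ∑ k ∈ K, (2:ℝ) ^ ((k : ℝ) * (1/2 - α)) * lam ^ (-α/2) *
          min 1 (((2:ℝ) ^ (k : ℝ) * lam ^ ((1:ℝ)/2) * s) ^ ((1:ℝ)/2))
        ≤ C' * lam ^ (-(1:ℝ)/4) * s ^ (α - 1/2)) ∧
    (∃ C'' : ℝ, 0 < C'' ∧ ∀ (lam s : ℝ) (K : Finset ℤ), 2 ≤ lam →
      lam ^ (-(1:ℝ)/2) ≤ s → s ≤ 1 →
      (∀ k ∈ K, lam ^ (-(1:ℝ)/2) ≤ (2:ℝ) ^ (k : ℝ) ∧ (2:ℝ) ^ (k : ℝ) ≤ C) →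
      ∑ k ∈ K, (2:ℝ) ^ ((k : ℝ) * (1/2 - 1)) * lam ^ (-(1:ℝ)/2) *
          min 1 (((2:ℝ) ^ (k : ℝ) * lam ^ ((1:ℝ)/2) * s) ^ ((1:ℝ)/2))
        ≤ C'' * lam ^ (-(1:ℝ)/4) * s ^ ((1:ℝ)/2) * Real.log lam) := by
  classical
  constructor
  · -- Part 1
    set ρ1 : ℝ := (2:ℝ) ^ ((1-α)/2) with hρ1def
    set ρ2 : ℝ := (2:ℝ) ^ ((2*α-1)/4) with hρ2def
    have hρ1 : 1 < ρ1 := Real.one_lt_rpow_iff_of_pos two_pos |>.mpr (Or.inl ⟨one_lt_two, by linarith⟩)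
    have hρ2 : 1 < ρ2 := Real.one_lt_rpow_iff_of_pos two_pos |>.mpr (Or.inl ⟨one_lt_two, by linarith⟩)
    refine ⟨ρ1/(ρ1-1) + ρ2/(ρ2-1), by
      have := div_pos (lt_trans one_pos hρ1) (by linarith : (0:ℝ) < ρ1 - 1)
      have := div_pos (lt_trans one_pos hρ2) (by linarith : (0:ℝ) < ρ2 - 1)
      linarith, ?_⟩
    intro lam s K hlam2 hs1 hs2 hK
    have hlam : (0:ℝ) < lam := by linarith
    have hs : (0:ℝ) < s := lt_of_lt_of_le (Real.rpow_pos_of_pos hlam _) hs1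
    set A : ℝ := lam ^ (-α/4) * s ^ (α/2) with hA
    set B : ℝ := lam ^ (-(α+1/2)/4) * s ^ ((2*α-1)/4) with hB
    have hApos : 0 < A := by positivity
    have hBpos : 0 < B := by positivity
    set x : ℝ := 4 * Real.logb 2 (B/A) with hx
    have hBA : B / A = lam ^ ((-1:ℝ)/8) * s ^ ((-1:ℝ)/4) := by
      rw [hB, hA, div_eq_iff (ne_of_gt hApos)]
      rw [mul_mul_mul_comm, ← Real.rpow_add hlam, ← Real.rpow_add hs]
      rw [show (-1:ℝ)/8 + -α/4 = -(α+1/2)/4 by ring,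
        show (-1:ℝ)/4 + α/2 = (2*α-1)/4 by ring]
    have hc1 : A * ρ1 ^ x = lam ^ (-(1:ℝ)/4) * s ^ (α-1/2) := by
      rw [hρ1def, ← Real.rpow_mul (by norm_num : (0:ℝ) ≤ 2),
        show (1-α)/2 * x = Real.logb 2 (B/A) * (2-2*α) by rw [hx]; ring,
        Real.rpow_mul (by norm_num : (0:ℝ) ≤ 2),
        Real.rpow_logb two_pos (by norm_num) (div_pos hBpos hApos), hBA,
        Real.mul_rpow (by positivity) (by positivity),
        ← Real.rpow_mul hlam.le, ← Real.rpow_mul hs.le, hA,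
        mul_mul_mul_comm, ← Real.rpow_add hlam, ← Real.rpow_add hs]
      rw [show -α/4 + (-1)/8*(2-2*α) = -(1:ℝ)/4 by ring,
        show α/2 + (-1)/4*(2-2*α) = α - 1/2 by ring]
    have hc2 : B * ρ2 ^ (-x) = lam ^ (-(1:ℝ)/4) * s ^ (α-1/2) := by
      rw [hρ2def, ← Real.rpow_mul (by norm_num : (0:ℝ) ≤ 2),
        show (2*α-1)/4 * (-x) = Real.logb 2 (B/A) * (1-2*α) by rw [hx]; ring,
        Real.rpow_mul (by norm_num : (0:ℝ) ≤ 2),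
        Real.rpow_logb two_pos (by norm_num) (div_pos hBpos hApos), hBA,
        Real.mul_rpow (by positivity) (by positivity),
        ← Real.rpow_mul hlam.le, ← Real.rpow_mul hs.le, hB,
        mul_mul_mul_comm, ← Real.rpow_add hlam, ← Real.rpow_add hs]
      rw [show -(α+1/2)/4 + (-1)/8*(1-2*α) = -(1:ℝ)/4 by ring,
        show (2*α-1)/4 + (-1)/4*(1-2*α) = α - 1/2 by ring]
    set K1 : Finset ℤ := K.filter (fun k : ℤ => (k:ℝ) ≤ x) with hK1
    set K2 : Finset ℤ := K.filter (fun k : ℤ => ¬ ((k:ℝ) ≤ x)) with hK2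
    rw [← Finset.sum_filter_add_sum_filter_not K (fun k : ℤ => (k:ℝ) ≤ x), ← hK1, ← hK2]
    have S1 : ∑ k ∈ K1,
        (2:ℝ) ^ ((k : ℝ) * (1/2 - α)) * lam ^ (-α/2) *
          min 1 (((2:ℝ) ^ (k : ℝ) * lam ^ ((1:ℝ)/2) * s) ^ ((1:ℝ)/2))
        ≤ A * (ρ1 ^ x * (ρ1/(ρ1-1))) := by
      calc ∑ k ∈ K1,
            (2:ℝ) ^ ((k : ℝ) * (1/2 - α)) * lam ^ (-α/2) *
              min 1 (((2:ℝ) ^ (k : ℝ) * lam ^ ((1:ℝ)/2) * s) ^ ((1:ℝ)/2))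
          ≤ ∑ k ∈ K1, A * ρ1 ^ (k:ℝ) := by
            apply Finset.sum_le_sum
            intro k hk
            have h := kn_term_bound lam s hlam hs α α (by linarith) hα1.le k
            refine le_trans h (le_of_eq ?_)
            rw [hρ1def, ← Real.rpow_mul (by norm_num : (0:ℝ) ≤ 2), hA,
              show (1-α)/2 * (k:ℝ) = (k:ℝ) * (1/2 - α + α/2) by ring,
              show (α - 2*α)/4 = -α/4 by ring]
            ring
        _ = A * ∑ k ∈ K1, ρ1 ^ (k:ℝ) := by
            rw [Finset.mul_sum]
        _ ≤ A * (ρ1 ^ x * (ρ1/(ρ1-1))) := by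
            apply mul_le_mul_of_nonneg_left _ hApos.le
            apply kn_geomA ρ1 hρ1 x
            intro k hk
            rw [hK1] at hk
            exact (Finset.mem_filter.mp hk).2
    have S2 : ∑ k ∈ K2,
        (2:ℝ) ^ ((k : ℝ) * (1/2 - α)) * lam ^ (-α/2) *
          min 1 (((2:ℝ) ^ (k : ℝ) * lam ^ ((1:ℝ)/2) * s) ^ ((1:ℝ)/2))
        ≤ B * (ρ2 ^ (-x) * (ρ2/(ρ2-1))) := by
      calc ∑ k ∈ K2,
            (2:ℝ) ^ ((k : ℝ) * (1/2 - α)) * lam ^ (-α/2) *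
              min 1 (((2:ℝ) ^ (k : ℝ) * lam ^ ((1:ℝ)/2) * s) ^ ((1:ℝ)/2))
          ≤ ∑ k ∈ K2, B * ρ2 ^ (-(k:ℝ)) := by
            apply Finset.sum_le_sum
            intro k hk
            have h := kn_term_bound lam s hlam hs (α - 1/2) α (by linarith) (by linarith) k
            refine le_trans h (le_of_eq ?_)
            rw [hρ2def, ← Real.rpow_mul (by norm_num : (0:ℝ) ≤ 2), hB,
              show (2*α-1)/4 * (-(k:ℝ)) = (k:ℝ) * (1/2 - α + (α - 1/2)/2) by ring,
              show (α - 1/2 - 2*α)/4 = -(α+1/2)/4 by ring,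
              show (α - 1/2)/2 = (2*α-1)/4 by ring]
            ring
        _ = B * ∑ k ∈ K2, ρ2 ^ (-(k:ℝ)) := by
            rw [Finset.mul_sum]
        _ ≤ B * (ρ2 ^ (-x) * (ρ2/(ρ2-1))) := by
            apply mul_le_mul_of_nonneg_left _ hBpos.le
            apply kn_geomB ρ2 hρ2 x
            intro k hk
            rw [hK2] at hk
            exact le_of_lt (lt_of_not_ge (Finset.mem_filter.mp hk).2)
    calc _ ≤ A * (ρ1 ^ x * (ρ1/(ρ1-1))) + B * (ρ2 ^ (-x) * (ρ2/(ρ2-1))) := add_le_add S1 S2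
      _ = (ρ1/(ρ1-1) + ρ2/(ρ2-1)) * lam ^ (-(1:ℝ)/4) * s ^ (α-1/2) := by
          have e1 : A * (ρ1 ^ x * (ρ1/(ρ1-1))) = (A * ρ1 ^ x) * (ρ1/(ρ1-1)) := by ring
          have e2 : B * (ρ2 ^ (-x) * (ρ2/(ρ2-1))) = (B * ρ2 ^ (-x)) * (ρ2/(ρ2-1)) := by ring
          rw [e1, e2, hc1, hc2]; ring
  · -- Part 2
    have hlog2 : (0:ℝ) < Real.log 2 := Real.log_pos one_lt_two
    have hlogC : (0:ℝ) ≤ Real.logb 2 C := Real.logb_nonneg one_lt_two hC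
    refine ⟨(Real.logb 2 C + 3/2) / Real.log 2, by positivity, ?_⟩
    intro lam s K hlam2 hs1 hs2 hK
    have hlam : (0:ℝ) < lam := by linarith
    have hs : (0:ℝ) < s := lt_of_lt_of_le (Real.rpow_pos_of_pos hlam _) hs1
    have hloglam : Real.log 2 ≤ Real.log lam := Real.log_le_log two_pos hlam2
    set t : ℝ := Real.log lam / Real.log 2 with ht
    have ht1 : 1 ≤ t := (one_le_div hlog2).mpr hloglam
    -- termwise bound
    have hterm : ∀ k ∈ K, (2:ℝ) ^ ((k : ℝ) * (1/2 - 1)) * lam ^ (-(1:ℝ)/2) *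
          min 1 (((2:ℝ) ^ (k : ℝ) * lam ^ ((1:ℝ)/2) * s) ^ ((1:ℝ)/2))
        ≤ lam ^ (-(1:ℝ)/4) * s ^ ((1:ℝ)/2) := by
      intro k _
      have h := kn_term_bound lam s hlam hs 1 1 zero_le_one le_rfl k
      have e : (2:ℝ) ^ ((k:ℝ) * (1/2 - 1 + 1/2)) * lam ^ (((1:ℝ) - 2*1)/4) * s ^ ((1:ℝ)/2)
          = lam ^ (-(1:ℝ)/4) * s ^ ((1:ℝ)/2) := by
        rw [show ((k:ℝ)) * (1/2 - 1 + 1/2) = 0 by ring, Real.rpow_zero, one_mul,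
          show ((1:ℝ) - 2*1)/4 = -(1:ℝ)/4 by norm_num]
      exact le_trans h (le_of_eq e)  -- e
    -- cardinality bound
    set m : ℤ := ⌈-(Real.logb 2 lam)/2⌉ with hm
    set M : ℤ := ⌊Real.logb 2 C⌋ with hM
    have hsub : K ⊆ Finset.Icc m M := by
      intro k hk
      obtain ⟨hlo, hhi⟩ := hK k hk
      rw [Finset.mem_Icc]
      constructor
      · rw [hm]
        apply Int.ceil_le.mpr
        have : lam ^ (-(1:ℝ)/2) = (2:ℝ) ^ (-(Real.logb 2 lam)/2) := by
          rw [show -(Real.logb 2 lam)/2 = Real.logb 2 lam * (-1/2) by ring,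
            Real.rpow_mul (by norm_num : (0:ℝ) ≤ 2),
            Real.rpow_logb two_pos (by norm_num) hlam]
        rw [this] at hlo
        exact (Real.rpow_le_rpow_left_iff one_lt_two).mp hlo
      · rw [hM]
        apply Int.le_floor.mpr
        have : C = (2:ℝ) ^ (Real.logb 2 C) :=
          (Real.rpow_logb two_pos (by norm_num) (by linarith)).symm
        rw [this] at hhi
        exact (Real.rpow_le_rpow_left_iff one_lt_two).mp hhi
    have hcard : (K.card : ℝ) ≤ (Real.logb 2 C + 3/2) * t := by
      have h1 : K.card ≤ (Finset.Icc m M).card := Finset.card_le_card hsub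
      rw [Int.card_Icc] at h1
      have h2 : ((M + 1 - m).toNat : ℝ) ≤ Real.logb 2 C + 1 + Real.logb 2 lam / 2 := by
        have hMle : (M:ℝ) ≤ Real.logb 2 C := Int.floor_le _
        have hmge : -(Real.logb 2 lam)/2 ≤ (m:ℝ) := Int.le_ceil _
        have hlam1 : (0:ℝ) ≤ Real.logb 2 lam := Real.logb_nonneg one_lt_two (by linarith)
        rcases le_or_gt (M + 1 - m) 0 with hc | hc
        · have : (M + 1 - m).toNat = 0 := Int.toNat_of_nonpos hc
          rw [this]; push_cast; linarith
        · rw [show ((M + 1 - m).toNat : ℝ) = (((M + 1 - m).toNat : ℤ) : ℝ) by push_cast; ring,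
            Int.toNat_of_nonneg (le_of_lt hc)]
          push_cast
          linarith
      have h3 : Real.logb 2 lam = t := by rw [ht, Real.logb, Real.log]
      have h4 : Real.logb 2 C + 1 + t/2 ≤ (Real.logb 2 C + 3/2) * t := by nlinarith
      calc (K.card : ℝ) ≤ ((M + 1 - m).toNat : ℝ) := by exact_mod_cast h1
        _ ≤ Real.logb 2 C + 1 + Real.logb 2 lam / 2 := h2
        _ = Real.logb 2 C + 1 + t/2 := by rw [h3]
        _ ≤ (Real.logb 2 C + 3/2) * t := h4
    calc ∑ k ∈ K, (2:ℝ) ^ ((k : ℝ) * (1/2 - 1)) * lam ^ (-(1:ℝ)/2) *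
          min 1 (((2:ℝ) ^ (k : ℝ) * lam ^ ((1:ℝ)/2) * s) ^ ((1:ℝ)/2))
        ≤ ∑ k ∈ K, lam ^ (-(1:ℝ)/4) * s ^ ((1:ℝ)/2) := Finset.sum_le_sum hterm
      _ = (K.card : ℝ) * (lam ^ (-(1:ℝ)/4) * s ^ ((1:ℝ)/2)) := by
          rw [Finset.sum_const, nsmul_eq_mul]
      _ ≤ ((Real.logb 2 C + 3/2) * t) * (lam ^ (-(1:ℝ)/4) * s ^ ((1:ℝ)/2)) := by
          apply mul_le_mul_of_nonneg_right hcard (by positivity)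
      _ = (Real.logb 2 C + 3/2) / Real.log 2 * lam ^ (-(1:ℝ)/4) * s ^ ((1:ℝ)/2) * Real.log lam := by
          rw [ht]; field_simp
end

section
/- Let N ≥ 4, and for each prime p with 1 < p ≤ √N and (p,q) = 1, suppose given real numbers λ(p), λ(p²) satisfying λ(p)² - λ(p²) = 1. Define coefficients: if |λ(p)| ≥ 1/2 set α_p = λ(p)/|λ(p)|, α_{p²} = 0; otherwise set α_p = 0, α_{p²} = λ(p²)/|λ(p²)|; set α_n = 0 for all other n ≤ N. Then Σ_{n≤N} α_n λ(n) ≥ (1/2) · #{primes p ≤ √N with (p,q)=1}, and in particular |Σ_{n≤N} α_n λ(n)| ≫_ε N^{1/2-ε} for any ε > 0 if q is fixed. -/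
open Finset


lemma sgn_mul_nonneg (x : ℝ) : 0 ≤ x / |x| * x := by
  rw [div_mul_eq_mul_div]
  exact div_nonneg (mul_self_nonneg x) (abs_nonneg x)

lemma sgn_mul_eq_abs {x : ℝ} (hx : x ≠ 0) : x / |x| * x = |x| := by
  rw [div_mul_eq_mul_div, ← abs_mul_abs_self, mul_div_assoc,
    div_self (abs_ne_zero.mpr hx), mul_one]

lemma centralBinom_le_pow (n : ℕ) (hn : 0 < n) :
    Nat.centralBinom n ≤ (2 * n) ^ (Nat.primeCounting (2 * n)) := by
  have hc : Nat.centralBinom n ≠ 0 := (Nat.centralBinom_pos n).ne'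
  have h2n : 0 < 2 * n := by omega
  have hπ : ((range (2*n+1)).filter Nat.Prime).card = Nat.primeCounting (2*n) := by
    rw [Nat.primeCounting, Nat.primeCounting', Nat.count_eq_card_filter_range]
  have hsub : (Nat.centralBinom n).factorization.support ⊆
      (range (2*n+1)).filter Nat.Prime := by
    intro p hp
    have hmem : p ∈ (Nat.centralBinom n).primeFactors := by
      rwa [← Nat.support_factorization]
    have hpp : p.Prime := Nat.prime_of_mem_primeFactors hmem
    have he : (Nat.centralBinom n).factorization p ≠ 0 :=
      Finsupp.mem_support_iff.mp hp
    have hle : p ^ (Nat.centralBinom n).factorization p ≤ 2 * n := by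
      have : Nat.centralBinom n = (2*n).choose n := rfl
      rw [this]
      exact Nat.pow_factorization_choose_le h2n
    have : p ≤ 2 * n := le_trans (Nat.le_self_pow he p) hle
    simp [Finset.mem_filter, Finset.mem_range, hpp, Nat.lt_succ_iff, this]
  calc Nat.centralBinom n
      = (Nat.centralBinom n).factorization.prod (fun p e => p ^ e) :=
        (Nat.factorization_prod_pow_eq_self hc).symm
    _ = ∏ p ∈ (Nat.centralBinom n).factorization.support,
          p ^ (Nat.centralBinom n).factorization p := rfl
    _ ≤ ∏ _p ∈ (Nat.centralBinom n).factorization.support, (2 * n) := by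
        apply Finset.prod_le_prod'
        intro p hp
        have : Nat.centralBinom n = (2*n).choose n := rfl
        rw [this]
        exact Nat.pow_factorization_choose_le h2n
    _ = (2 * n) ^ (Nat.centralBinom n).factorization.support.card :=
        Finset.prod_const _
    _ ≤ (2 * n) ^ (Nat.primeCounting (2 * n)) := by
        apply Nat.pow_le_pow_right h2n
        rw [← hπ]
        exact Finset.card_le_card hsub

lemma log_cb (n : ℕ) (hn : 4 ≤ n) :
    (n : ℝ) * Real.log 4 ≤ Real.log n + (Nat.primeCounting (2*n) : ℝ) * Real.log (2*n) := by
  have h1 : (4:ℕ) ^ n ≤ n * (2*n) ^ (Nat.primeCounting (2*n)) :=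
    le_trans (Nat.four_pow_lt_mul_centralBinom n hn).le
      (Nat.mul_le_mul_left n (centralBinom_le_pow n (by omega)))
  have h1R : (4:ℝ) ^ n ≤ (n:ℝ) * (2*n:ℕ) ^ (Nat.primeCounting (2*n)) := by
    exact_mod_cast h1
  have hnpos : (0:ℝ) < n := by positivity
  have hlog := Real.log_le_log (by positivity) h1R
  rw [Real.log_pow, Real.log_mul hnpos.ne' (by positivity), Real.log_pow] at hlog
  push_cast at hlog ⊢
  linarith

lemma cheby (s : ℕ) (hs : 16 ≤ s) :
    (s : ℝ) ≤ 4 * Real.log s * (Nat.primeCounting s) := by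
  set n := s / 2 with hn
  have hn8 : 8 ≤ n := by omega
  have h2ns : 2 * n ≤ s := by omega
  have hs2n : s ≤ 2 * n + 1 := by omega
  have hmono : (Nat.primeCounting (2*n) : ℝ) ≤ Nat.primeCounting s := by
    exact_mod_cast Nat.monotone_primeCounting h2ns
  have hlogmono : Real.log (2*n : ℕ) ≤ Real.log s := by
    apply Real.log_le_log (by positivity)
    exact_mod_cast h2ns
  have hlog2npos : (0:ℝ) ≤ Real.log (2*n : ℕ) := by
    apply Real.log_nonneg
    have : (1:ℕ) ≤ 2*n := by omega
    exact_mod_cast this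
  have hkey := log_cb n (by omega)
  have hππ : (Nat.primeCounting (2*n) : ℝ) * Real.log (2*n : ℕ)
      ≤ (Nat.primeCounting s : ℝ) * Real.log s := by
    apply mul_le_mul hmono hlogmono hlog2npos (by positivity)
  -- bound log n ≤ 2 * (sqrt n - 1)
  have hnpos : (0:ℝ) < n := by positivity
  have hsq : Real.sqrt n * Real.sqrt n = (n:ℝ) := Real.mul_self_sqrt (by positivity)
  have hsqnn : (0:ℝ) ≤ Real.sqrt n := Real.sqrt_nonneg _
  have hlogn : Real.log n ≤ 2 * (Real.sqrt n - 1) := by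
    have h := Real.log_le_sub_one_of_pos (x := Real.sqrt n) (by positivity)
    have h2 : Real.log (Real.sqrt n) = Real.log n / 2 := Real.log_sqrt (by positivity)
    linarith
  have hlog4 : Real.log 4 = 2 * Real.log 2 := by
    rw [show (4:ℝ) = 2^2 by norm_num, Real.log_pow]
    push_cast; ring
  have hlog2 : 0.6931471803 < Real.log 2 := Real.log_two_gt_d9
  have hsqn8 : (8:ℝ)/3 ≤ Real.sqrt n := by
    have h64 : Real.sqrt ((8/3:ℝ)^2) ≤ Real.sqrt n := by
      apply Real.sqrt_le_sqrt
      have h8 : (8:ℝ) ≤ n := by exact_mod_cast hn8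
      norm_num
      linarith
    rwa [Real.sqrt_sq (by norm_num)] at h64
  have hn8R : (8:ℝ) ≤ n := by exact_mod_cast hn8
  have hs2nR : (s:ℝ) ≤ 2*(n:ℝ) + 1 := by exact_mod_cast hs2n
  have haux : (0:ℝ) ≤ Real.sqrt n * (3 * Real.sqrt n - 8) :=
    mul_nonneg hsqnn (by linarith)
  push_cast at hkey hππ hlogmono hlog2npos
  have hfinal : (s:ℝ) ≤ 4 * ((Nat.primeCounting (2*n) : ℝ) * Real.log (2*(n:ℝ))) := by
    nlinarith [hkey, hlogn, hsq, hsqnn, hn8R, hs2nR, hlog2, hlog4, haux]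
  calc (s:ℝ) ≤ 4 * ((Nat.primeCounting (2*n) : ℝ) * Real.log (2*(n:ℝ))) := hfinal
    _ ≤ 4 * ((Nat.primeCounting s : ℝ) * Real.log s) := by nlinarith [hππ]
    _ = 4 * Real.log s * (Nat.primeCounting s) := by ring

lemma card_lower (q N : ℕ) (hq : 0 < q) :
    Nat.primeCounting (Nat.sqrt N) - q.primeFactors.card ≤
      ((Finset.range (N+1)).filter (fun p => p.Prime ∧ p^2 ≤ N ∧ Nat.Coprime p q)).card := by
  set A := (Finset.range (Nat.sqrt N + 1)).filter Nat.Prime with hA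
  have hcardA : A.card = Nat.primeCounting (Nat.sqrt N) := by
    rw [Nat.primeCounting, Nat.primeCounting', Nat.count_eq_card_filter_range]
  have hsub : A \ q.primeFactors ⊆
      (Finset.range (N+1)).filter (fun p => p.Prime ∧ p^2 ≤ N ∧ Nat.Coprime p q) := by
    intro p hp
    rw [Finset.mem_sdiff] at hp
    obtain ⟨hpA, hpB⟩ := hp
    rw [hA, Finset.mem_filter, Finset.mem_range] at hpA
    obtain ⟨hlt, hpp⟩ := hpA
    have hps : p ≤ Nat.sqrt N := by omega
    have hp2 : p ^ 2 ≤ N := by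
      rw [pow_two]
      exact Nat.le_sqrt.mp hps
    have hndvd : ¬ p ∣ q := by
      intro hdvd
      exact hpB (Nat.mem_primeFactors.mpr ⟨hpp, hdvd, hq.ne'⟩)
    have hcop : Nat.Coprime p q := (Nat.Prime.coprime_iff_not_dvd hpp).mpr hndvd
    have hpN : p < N + 1 := by
      have := Nat.sqrt_le_self N
      omega
    rw [Finset.mem_filter, Finset.mem_range]
    exact ⟨hpN, hpp, hp2, hcop⟩
  calc Nat.primeCounting (Nat.sqrt N) - q.primeFactors.card
      = A.card - q.primeFactors.card := by rw [hcardA]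
    _ ≤ (A \ q.primeFactors).card := Finset.le_card_sdiff _ _
    _ ≤ _ := Finset.card_le_card hsub

lemma part1 (q N : ℕ) (lam a : ℕ → ℝ) (hN : 4 ≤ N)
    (hH : ∀ p : ℕ, p.Prime → p ^ 2 ≤ N → Nat.Coprime p q → lam p ^ 2 - lam (p ^ 2) = 1)
    (hamp : ∀ p : ℕ, p.Prime → p ^ 2 ≤ N → Nat.Coprime p q →
        ((1/2 ≤ |lam p| → a p = lam p / |lam p| ∧ a (p ^ 2) = 0) ∧
         (|lam p| < 1/2 → a p = 0 ∧ a (p ^ 2) = lam (p ^ 2) / |lam (p ^ 2)|)))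
    (hzero : ∀ n : ℕ, n ≤ N →
        (¬ ∃ p : ℕ, p.Prime ∧ p ^ 2 ≤ N ∧ Nat.Coprime p q ∧ (n = p ∨ n = p ^ 2)) →
        a n = 0) :
    (1/2 : ℝ) * ((Finset.range (N + 1)).filter
        (fun p => p.Prime ∧ p ^ 2 ≤ N ∧ Nat.Coprime p q)).card
      ≤ ∑ n ∈ Finset.Icc 1 N, a n * lam n := by
  classical
  set P := (Finset.range (N + 1)).filter
      (fun p => p.Prime ∧ p ^ 2 ≤ N ∧ Nat.Coprime p q) with hP
  set g : ℕ → ℕ := fun p => if (1/2:ℝ) ≤ |lam p| then p else p ^ 2 with hg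
  have hmemP : ∀ p ∈ P, p.Prime ∧ p ^ 2 ≤ N ∧ Nat.Coprime p q := by
    intro p hp
    rw [hP, Finset.mem_filter] at hp
    exact hp.2
  -- nonnegativity of all terms
  have hnonneg : ∀ n ∈ Finset.Icc 1 N, 0 ≤ a n * lam n := by
    intro n hn
    rw [Finset.mem_Icc] at hn
    by_cases hsup : ∃ p : ℕ, p.Prime ∧ p ^ 2 ≤ N ∧ Nat.Coprime p q ∧ (n = p ∨ n = p ^ 2)
    · obtain ⟨p, hpp, hp2, hcop, heq⟩ := hsup
      obtain ⟨hbigcase, hsmallcase⟩ := hamp p hpp hp2 hcop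
      rcases le_or_gt (1/2 : ℝ) |lam p| with hbig | hsmall
      · obtain ⟨ha1, ha2⟩ := hbigcase hbig
        rcases heq with rfl | rfl
        · rw [ha1]; exact sgn_mul_nonneg _
        · rw [ha2]; simp
      · obtain ⟨ha1, ha2⟩ := hsmallcase hsmall
        rcases heq with rfl | rfl
        · rw [ha1]; simp
        · rw [ha2]; exact sgn_mul_nonneg _
    · rw [hzero n hn.2 hsup]; simp
  -- each selected index contributes at least 1/2
  have hhalf : ∀ p ∈ P, (1/2 : ℝ) ≤ a (g p) * lam (g p) := by
    intro p hp
    obtain ⟨hpp, hp2, hcop⟩ := hmemP p hp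
    obtain ⟨hbigcase, hsmallcase⟩ := hamp p hpp hp2 hcop
    rw [hg]
    by_cases hbig : (1/2:ℝ) ≤ |lam p|
    · simp only [if_pos hbig]
      obtain ⟨ha1, _⟩ := hbigcase hbig
      have hne : lam p ≠ 0 := by
        intro h; rw [h] at hbig; simp at hbig; linarith
      rw [ha1, sgn_mul_eq_abs hne]
      exact hbig
    · simp only [if_neg hbig]
      push_neg at hbig
      obtain ⟨_, ha2⟩ := hsmallcase hbig
      have hval : lam (p ^ 2) = lam p ^ 2 - 1 := by
        have := hH p hpp hp2 hcop; linarith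
      have hsq : lam p ^ 2 < 1/4 := by
        have h1 : lam p ^ 2 = |lam p| ^ 2 := (sq_abs _).symm
        nlinarith [abs_nonneg (lam p)]
      have hle : lam (p ^ 2) ≤ -(3/4) := by rw [hval]; linarith
      have habs : (3/4 : ℝ) ≤ |lam (p ^ 2)| := by
        have := neg_le_abs (lam (p ^ 2)); linarith
      have hne : lam (p ^ 2) ≠ 0 := by intro h; rw [h] at hle; linarith
      rw [ha2, sgn_mul_eq_abs hne]
      linarith
  -- injectivity of g on P
  have hinj : ∀ p ∈ P, ∀ p' ∈ P, g p = g p' → p = p' := by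
    intro p hp p' hp' hgg
    obtain ⟨hpp, _, _⟩ := hmemP p hp
    obtain ⟨hpp', _, _⟩ := hmemP p' hp'
    rw [hg] at hgg
    simp only at hgg
    by_cases h1 : (1/2:ℝ) ≤ |lam p| <;> by_cases h2 : (1/2:ℝ) ≤ |lam p'| <;>
      simp only [if_pos, if_neg, h1, h2, if_true, if_false] at hgg
    · exact hgg
    · exact absurd (hgg ▸ hpp) (Nat.Prime.not_prime_pow le_rfl)
    · exact absurd (hgg ▸ hpp') (Nat.Prime.not_prime_pow le_rfl)
    · exact Nat.pow_left_injective (by norm_num) hgg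
  -- image of g lands in Icc 1 N
  have hsub : P.image g ⊆ Finset.Icc 1 N := by
    intro m hm
    rw [Finset.mem_image] at hm
    obtain ⟨p, hp, rfl⟩ := hm
    obtain ⟨hpp, hp2, _⟩ := hmemP p hp
    have h2p : 2 ≤ p := hpp.two_le
    rw [Finset.mem_Icc, hg]
    by_cases h1 : (1/2:ℝ) ≤ |lam p| <;>
      simp only [if_pos, if_neg, h1, if_true, if_false]
    · constructor
      · omega
      · calc p ≤ p ^ 2 := Nat.le_self_pow (by norm_num) p
          _ ≤ N := hp2
    · exact ⟨Nat.one_le_pow _ _ (by omega), hp2⟩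
  calc (1/2 : ℝ) * P.card = ∑ _p ∈ P, (1/2 : ℝ) := by
        rw [Finset.sum_const, nsmul_eq_mul, mul_comm]
    _ ≤ ∑ p ∈ P, a (g p) * lam (g p) := Finset.sum_le_sum hhalf
    _ = ∑ m ∈ P.image g, a m * lam m := (Finset.sum_image (f := fun m => a m * lam m) hinj).symm
    _ ≤ ∑ n ∈ Finset.Icc 1 N, a n * lam n := by
        apply Finset.sum_le_sum_of_subset_of_nonneg hsub
        intro n hn _
        exact hnonneg n hn

lemma event_real (ε : ℝ) (hε : 0 < ε) (ω : ℕ) :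
    ∀ᶠ x : ℝ in Filter.atTop,
      x ^ ((1:ℝ)/2 - ε) + (ω:ℝ)/2 ≤ (Real.sqrt x - 1) / (8 * Real.log x) := by
  have h1 := (isLittleO_log_rpow_atTop hε).def (by norm_num : (0:ℝ) < 1/32)
  have h2 := (isLittleO_log_rpow_atTop (by norm_num : (0:ℝ) < 1/2)).def
      (c := 1/(16*((ω:ℝ)+1))) (by positivity)
  filter_upwards [h1, h2, Filter.eventually_ge_atTop (4:ℝ),
    Filter.eventually_ge_atTop (Real.exp 1)] with x hx1 hx2 hx4 hxe
  have hxpos : (0:ℝ) < x := by linarith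
  have hL1 : (1:ℝ) ≤ Real.log x := by
    rw [Real.le_log_iff_exp_le hxpos]
    simpa using hxe
  have hLpos : (0:ℝ) < Real.log x := by linarith
  set s := Real.sqrt x with hs
  set L := Real.log x with hLdef
  have hsnn : 0 ≤ s := Real.sqrt_nonneg x
  have hs2 : (2:ℝ) ≤ s := by
    rw [hs, show (2:ℝ) = Real.sqrt 4 by rw [show (4:ℝ) = 2^2 by norm_num, Real.sqrt_sq] <;> norm_num]
    exact Real.sqrt_le_sqrt hx4
  -- extract clean bounds from the littleO facts
  have hxeps : 32 * L ≤ x ^ ε := by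
    rw [Real.norm_eq_abs, Real.norm_eq_abs, abs_of_nonneg hLpos.le,
      abs_of_nonneg (Real.rpow_nonneg hxpos.le ε)] at hx1
    linarith
  have hLs : 16 * (ω:ℝ) * L ≤ s := by
    rw [Real.norm_eq_abs, Real.norm_eq_abs, abs_of_nonneg hLpos.le,
      abs_of_nonneg (Real.rpow_nonneg hxpos.le _)] at hx2
    have hx12 : x ^ ((1:ℝ)/2) = s := by
      rw [hs, Real.sqrt_eq_rpow]
    rw [hx12] at hx2
    have hω1 : (0:ℝ) < (ω:ℝ) + 1 := by positivity
    have := mul_le_mul_of_nonneg_left hx2 (by positivity : (0:ℝ) ≤ 16 * ((ω:ℝ)+1))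
    have heq : 16 * ((ω:ℝ)+1) * (1 / (16*((ω:ℝ)+1)) * s) = s := by
      field_simp
    rw [heq] at this
    nlinarith [hLpos.le, hsnn]
  -- rewrite the rpow
  have hrw : x ^ ((1:ℝ)/2 - ε) = s / x ^ ε := by
    rw [Real.rpow_sub hxpos, hs, Real.sqrt_eq_rpow]
  rw [hrw, le_div_iff₀ (by positivity : (0:ℝ) < 8 * L)]
  have hxεpos : (0:ℝ) < x ^ ε := Real.rpow_pos_of_pos hxpos ε
  -- (s / x^ε) * (8L) ≤ s/4
  have hA : s / x ^ ε * (8 * L) ≤ s / 4 := by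
    rw [div_mul_eq_mul_div, div_le_iff₀ hxεpos]
    have h32 : (0:ℝ) < 32 * L := by positivity
    calc s * (8 * L) = (s / 4) * (32 * L) := by ring
      _ ≤ (s / 4) * x ^ ε := by
          apply mul_le_mul_of_nonneg_left hxeps (by positivity)
      _ = s / 4 * x ^ ε := rfl
  have hB : (ω:ℝ)/2 * (8 * L) ≤ s / 4 := by
    have : (ω:ℝ)/2 * (8 * L) = (16 * (ω:ℝ) * L) / 4 := by ring
    rw [this]
    linarith
  have : (s / x ^ ε + (ω:ℝ)/2) * (8 * L) = s / x ^ ε * (8 * L) + (ω:ℝ)/2 * (8 * L) := by ring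
  rw [this]
  linarith

lemma event_nat (q : ℕ) (hq : 0 < q) (ε : ℝ) (hε : 0 < ε) :
    ∃ N₀ : ℕ, ∀ N : ℕ, N₀ ≤ N → 4 ≤ N ∧
      (N:ℝ) ^ ((1:ℝ)/2 - ε) ≤
        (1/2 : ℝ) * ((Nat.primeCounting (Nat.sqrt N) : ℝ) - (q.primeFactors.card : ℝ)) := by
  have hcast : Filter.Tendsto (fun N : ℕ => (N:ℝ)) Filter.atTop Filter.atTop :=
    tendsto_natCast_atTop_atTop
  have hE : ∀ᶠ N : ℕ in Filter.atTop,
      (N:ℝ) ^ ((1:ℝ)/2 - ε) + ((q.primeFactors.card : ℕ):ℝ)/2 ≤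
        (Real.sqrt N - 1) / (8 * Real.log N) :=
    hcast.eventually (event_real ε hε q.primeFactors.card)
  have hAll : ∀ᶠ N : ℕ in Filter.atTop, 4 ≤ N ∧
      (N:ℝ) ^ ((1:ℝ)/2 - ε) ≤
        (1/2 : ℝ) * ((Nat.primeCounting (Nat.sqrt N) : ℝ) - (q.primeFactors.card : ℝ)) := by
    filter_upwards [hE, Filter.eventually_ge_atTop 289] with N hEN h289
    have h4N : 4 ≤ N := by omega
    refine ⟨h4N, ?_⟩
    set s := Nat.sqrt N with hsdef
    have hs16 : 16 ≤ s := by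
      rw [hsdef]
      have : 16 * 16 ≤ N := by omega
      exact Nat.le_sqrt.mpr this
    have hcheb := cheby s hs16
    have hsR : (16:ℝ) ≤ (s:ℝ) := by exact_mod_cast hs16
    have hLs : (0:ℝ) < Real.log s := Real.log_pos (by linarith)
    have hsN : s ≤ N := Nat.sqrt_le_self N
    have hLsN : Real.log s ≤ Real.log N := by
      apply Real.log_le_log (by positivity)
      exact_mod_cast hsN
    have hNpos : (0:ℝ) < N := by positivity
    have hLN : (0:ℝ) < Real.log N := lt_of_lt_of_le hLs hLsN
    -- sqrt N - 1 ≤ s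
    have hsqrtN : Real.sqrt N - 1 ≤ (s:ℝ) := by
      have h1 : N < (s+1)*(s+1) := Nat.lt_succ_sqrt N
      have h2 : (N:ℝ) < ((s:ℝ)+1)^2 := by
        have : (N:ℝ) < ((s+1)*(s+1) : ℕ) := by exact_mod_cast h1
        push_cast at this
        nlinarith [this]
      have h3 : Real.sqrt N ≤ (s:ℝ)+1 := by
        have := Real.sqrt_le_sqrt h2.le
        rwa [Real.sqrt_sq (by positivity : (0:ℝ) ≤ (s:ℝ)+1)] at this
      linarith
    have hsqrtN0 : (0:ℝ) ≤ Real.sqrt N - 1 := by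
      have : (1:ℝ) ≤ Real.sqrt N := by
        rw [show (1:ℝ) = Real.sqrt 1 by simp]
        apply Real.sqrt_le_sqrt
        exact_mod_cast Nat.one_le_iff_ne_zero.mpr (by omega)
      linarith
    -- (sqrt N - 1)/(8 log N) ≤ s/(8 log s)
    have hstep1 : (Real.sqrt N - 1) / (8 * Real.log N) ≤ (s:ℝ) / (8 * Real.log s) := by
      apply div_le_div₀ (by positivity) hsqrtN (by positivity)
      linarith
    -- s/(8 log s) ≤ π(s)/2
    have hstep2 : (s:ℝ) / (8 * Real.log s) ≤ (Nat.primeCounting s : ℝ) / 2 := by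
      rw [div_le_div_iff₀ (by positivity) (by norm_num)]
      nlinarith [hcheb]
    have := hEN
    have hfin : (N:ℝ) ^ ((1:ℝ)/2 - ε) + (q.primeFactors.card : ℝ)/2
        ≤ (Nat.primeCounting s : ℝ) / 2 := by
      push_cast at this ⊢
      linarith
    linarith
  rw [Filter.eventually_atTop] at hAll
  exact hAll

/-- The amplifier built from Hecke eigenvalues satisfying λ(p)² - λ(p²) = 1 has a
large eigenvalue: each admissible prime contributes at least 1/2, and the total is
≫_ε N^{1/2-ε}. -/
theorem stmt10 (q : ℕ) (hq : 0 < q) (ε : ℝ) (hε : 0 < ε) :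
    (∀ (N : ℕ) (lam a : ℕ → ℝ), 4 ≤ N →
      (∀ p : ℕ, p.Prime → p ^ 2 ≤ N → Nat.Coprime p q → lam p ^ 2 - lam (p ^ 2) = 1) →
      (∀ p : ℕ, p.Prime → p ^ 2 ≤ N → Nat.Coprime p q →
        ((1/2 ≤ |lam p| → a p = lam p / |lam p| ∧ a (p ^ 2) = 0) ∧
         (|lam p| < 1/2 → a p = 0 ∧ a (p ^ 2) = lam (p ^ 2) / |lam (p ^ 2)|))) →
      (∀ n : ℕ, n ≤ N →
        (¬ ∃ p : ℕ, p.Prime ∧ p ^ 2 ≤ N ∧ Nat.Coprime p q ∧ (n = p ∨ n = p ^ 2)) →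
        a n = 0) →
      (1/2 : ℝ) * ((Finset.range (N + 1)).filter
          (fun p => p.Prime ∧ p ^ 2 ≤ N ∧ Nat.Coprime p q)).card
        ≤ ∑ n ∈ Finset.Icc 1 N, a n * lam n) ∧
    (∃ c : ℝ, 0 < c ∧ ∃ N₀ : ℕ, ∀ (N : ℕ) (lam a : ℕ → ℝ), N₀ ≤ N →
      (∀ p : ℕ, p.Prime → p ^ 2 ≤ N → Nat.Coprime p q → lam p ^ 2 - lam (p ^ 2) = 1) →
      (∀ p : ℕ, p.Prime → p ^ 2 ≤ N → Nat.Coprime p q →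
        ((1/2 ≤ |lam p| → a p = lam p / |lam p| ∧ a (p ^ 2) = 0) ∧
         (|lam p| < 1/2 → a p = 0 ∧ a (p ^ 2) = lam (p ^ 2) / |lam (p ^ 2)|))) →
      (∀ n : ℕ, n ≤ N →
        (¬ ∃ p : ℕ, p.Prime ∧ p ^ 2 ≤ N ∧ Nat.Coprime p q ∧ (n = p ∨ n = p ^ 2)) →
        a n = 0) →
      c * (N : ℝ) ^ ((1:ℝ)/2 - ε) ≤ |∑ n ∈ Finset.Icc 1 N, a n * lam n|) := by
  constructor
  · intro N lam a hN hH hamp hzero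
    exact part1 q N lam a hN hH hamp hzero
  · obtain ⟨N₀, hN₀⟩ := event_nat q hq ε hε
    refine ⟨1, one_pos, N₀, ?_⟩
    intro N lam a hNN hH hamp hzero
    obtain ⟨h4N, hgrow⟩ := hN₀ N hNN
    have hpart1 := part1 q N lam a h4N hH hamp hzero
    set P := (Finset.range (N + 1)).filter
        (fun p => p.Prime ∧ p ^ 2 ≤ N ∧ Nat.Coprime p q) with hP
    have h1 := card_lower q N hq
    have h2 : ((Nat.primeCounting (Nat.sqrt N) - q.primeFactors.card : ℕ) : ℝ)
        ≤ (P.card : ℝ) := by exact_mod_cast h1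
    have h3 : (Nat.primeCounting (Nat.sqrt N) : ℝ) - (q.primeFactors.card : ℝ)
        ≤ ((Nat.primeCounting (Nat.sqrt N) - q.primeFactors.card : ℕ) : ℝ) := by
      rcases le_or_gt q.primeFactors.card (Nat.primeCounting (Nat.sqrt N)) with h | h
      · rw [Nat.cast_sub h]
      · have hge : Nat.primeCounting (Nat.sqrt N) - q.primeFactors.card = 0 := by omega
        rw [hge]
        have : (Nat.primeCounting (Nat.sqrt N) : ℝ) ≤ (q.primeFactors.card : ℝ) := by
          exact_mod_cast h.le
        simpa using this
    have hchain : (N:ℝ) ^ ((1:ℝ)/2 - ε) ≤ (1/2 : ℝ) * (P.card : ℝ) := by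
      calc (N:ℝ) ^ ((1:ℝ)/2 - ε)
          ≤ (1/2 : ℝ) * ((Nat.primeCounting (Nat.sqrt N) : ℝ) - q.primeFactors.card) :=
            hgrow
        _ ≤ (1/2 : ℝ) * (P.card : ℝ) := by linarith
    have hsum : (N:ℝ) ^ ((1:ℝ)/2 - ε) ≤ ∑ n ∈ Finset.Icc 1 N, a n * lam n :=
      le_trans hchain hpart1
    calc (1:ℝ) * (N : ℝ) ^ ((1:ℝ)/2 - ε) = (N : ℝ) ^ ((1:ℝ)/2 - ε) := one_mul _
      _ ≤ ∑ n ∈ Finset.Icc 1 N, a n * lam n := hsum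
      _ ≤ |∑ n ∈ Finset.Icc 1 N, a n * lam n| := le_abs_self _
end

section
/- Let {α_n}_{n≤N} be complex numbers supported on primes p ≤ √N and their squares p², with |α_n| ≤ 1. Then Σ_{m,n≤N} Σ_{d | gcd(m,n)} |α_m α_n| · d/√(mn) ≲_ε N^ε Σ_{n≤N} |α_n|². -/
open Finset

private lemma amgm11 (m n : ℕ) (hm : 1 ≤ m) (hn : 1 ≤ n) (x y : ℝ) :
    x * y * 1 / Real.sqrt ((m:ℝ) * n) ≤ (x^2 * (n:ℝ)⁻¹ + y^2 * (m:ℝ)⁻¹)/2 := by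
  have hm0 : (0:ℝ) < m := by exact_mod_cast hm
  have hn0 : (0:ℝ) < n := by exact_mod_cast hn
  have hsm := Real.sq_sqrt hm0.le
  have hsn := Real.sq_sqrt hn0.le
  have h1 : Real.sqrt ((m:ℝ)*n) = Real.sqrt m * Real.sqrt n := Real.sqrt_mul hm0.le _
  have hsm0 : 0 < Real.sqrt m := Real.sqrt_pos.mpr hm0
  have hsn0 : 0 < Real.sqrt n := Real.sqrt_pos.mpr hn0
  have e : x * y * 1 / Real.sqrt ((m:ℝ)*n) = (x*Real.sqrt m)*(y*Real.sqrt n)/((m:ℝ)*n) := by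
    rw [h1]; field_simp
    linear_combination (-(x*y*Real.sqrt n^2))*hsm - (x*y*(m:ℝ))*hsn
  have e2 : x^2 * (n:ℝ)⁻¹ = (x*Real.sqrt m)^2/((m:ℝ)*n) := by
    rw [mul_pow, hsm]; field_simp
  have e3 : y^2 * (m:ℝ)⁻¹ = (y*Real.sqrt n)^2/((m:ℝ)*n) := by
    rw [mul_pow, hsn]; field_simp
  rw [e, e2, e3, ← add_div, div_div]
  rw [div_le_div_iff₀ (by positivity) (by positivity)]
  nlinarith [two_mul_le_add_sq (x*Real.sqrt m) (y*Real.sqrt n), mul_pos hm0 hn0]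

private lemma sumdiv11 (p k : ℕ) (hp : p.Prime) (hk : k ≤ 2) :
    ∑ d ∈ (p^k).divisors, (d:ℝ) ≤ 3 * (p^k : ℕ) := by
  have hne : p ^ k ≠ 0 := pow_ne_zero _ hp.pos.ne'
  have hcard : (p^k).divisors.card = k + 1 := by
    rw [Nat.divisors_prime_pow hp, Finset.card_map, Finset.card_range]
  calc ∑ d ∈ (p^k).divisors, (d:ℝ) ≤ ∑ d ∈ (p^k).divisors, ((p^k : ℕ) : ℝ) := by
        refine Finset.sum_le_sum fun d hd => ?_
        exact_mod_cast Nat.le_of_dvd (Nat.pos_of_ne_zero hne) (Nat.mem_divisors.mp hd).1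
    _ = ((k+1 : ℕ) : ℝ) * (p^k : ℕ) := by rw [Finset.sum_const, hcard]; push_cast; ring
    _ ≤ 3 * (p^k : ℕ) := by
        have h3 : ((k+1:ℕ):ℝ) ≤ 3 := by exact_mod_cast Nat.succ_le_succ hk
        have h0 : (0:ℝ) ≤ ((p^k : ℕ):ℝ) := by positivity
        nlinarith

private lemma gcd_cases11 (p m n : ℕ) (hp : p.Prime) (hm : m = p ∨ m = p^2) (hn : n = p ∨ n = p^2) :
    ∃ k, k ≤ 2 ∧ Nat.gcd m n = p ^ k := by
  have hpp : p ∣ p^2 := dvd_pow_self p two_ne_zero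
  rcases hm with rfl | rfl <;> rcases hn with rfl | rfl
  · exact ⟨1, by norm_num, by simp [Nat.gcd_self]⟩
  · exact ⟨1, by norm_num, by simpa using Nat.gcd_eq_left hpp⟩
  · exact ⟨1, by norm_num, by simpa using Nat.gcd_eq_right hpp⟩
  · exact ⟨2, le_refl _, Nat.gcd_self _⟩

private lemma gcd_le_sqrt11 (m n : ℕ) (hm : 1 ≤ m) (hn : 1 ≤ n) :
    ((Nat.gcd m n : ℕ) : ℝ) ≤ Real.sqrt ((m:ℝ) * n) := by
  rw [Real.le_sqrt (Nat.cast_nonneg _) (by positivity)]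
  have h1 : Nat.gcd m n ≤ m := Nat.le_of_dvd hm (Nat.gcd_dvd_left _ _)
  have h2 : Nat.gcd m n ≤ n := Nat.le_of_dvd hn (Nat.gcd_dvd_right _ _)
  have h1' : (Nat.gcd m n : ℝ) ≤ m := by exact_mod_cast h1
  have h2' : (Nat.gcd m n : ℝ) ≤ n := by exact_mod_cast h2
  nlinarith [Nat.cast_nonneg (α := ℝ) (Nat.gcd m n)]

/-- Diagonal-term estimate in the amplification method. -/
theorem stmt11 (ε : ℝ) (hε : 0 < ε) :
    ∃ K : ℝ, ∀ (N : ℕ) (a : ℕ → ℂ),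
      (∀ n : ℕ, a n ≠ 0 → ∃ p : ℕ, p.Prime ∧ p ^ 2 ≤ N ∧ (n = p ∨ n = p ^ 2)) →
      (∀ n : ℕ, ‖a n‖ ≤ 1) →
      ∑ m ∈ Finset.Icc 1 N, ∑ n ∈ Finset.Icc 1 N, ∑ d ∈ (Nat.gcd m n).divisors,
          ‖a m‖ * ‖a n‖ * (d : ℝ) / Real.sqrt ((m : ℝ) * n)
        ≤ K * (N : ℝ) ^ ε * ∑ n ∈ Finset.Icc 1 N, ‖a n‖ ^ 2 := by
  classical
  refine ⟨7 + 1/ε, fun N a hsupp hbd => ?_⟩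
  rcases Nat.eq_zero_or_pos N with rfl | hN
  · simp
  have hN1 : (1:ℝ) ≤ N := by exact_mod_cast hN
  set S : ℝ := ∑ n ∈ Finset.Icc 1 N, ‖a n‖ ^ 2 with hSdef
  have hS0 : 0 ≤ S := Finset.sum_nonneg fun n _ => sq_nonneg _
  set H : ℝ := ∑ n ∈ Finset.Icc 1 N, ((n:ℝ))⁻¹ with hHdef
  have hH0 : 0 ≤ H := Finset.sum_nonneg fun n _ => by positivity
  set D : ℕ → ℕ → ℝ := fun m n =>
    if a m ≠ 0 ∧ a n ≠ 0 ∧ Nat.gcd m n ≠ 1 then 1 else 0 with hDdef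
  -- key prime fact
  have key_prime : ∀ (p m n : ℕ), p.Prime → (m = p ∨ m = p^2) → a n ≠ 0 →
      Nat.gcd m n ≠ 1 → (n = p ∨ n = p^2) := by
    intro p m n hp hmp han hg
    obtain ⟨q, hq, -, hnq⟩ := hsupp n han
    by_cases hpq : p = q
    · subst hpq; exact hnq
    · exfalso
      apply hg
      have hco : Nat.Coprime p q := (Nat.coprime_primes hp hq).mpr hpq
      rcases hmp with rfl | rfl <;> rcases hnq with rfl | rfl
      · exact hco
      · simpa using Nat.Coprime.pow 1 2 hco
      · simpa using Nat.Coprime.pow 2 1 hco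
      · simpa using Nat.Coprime.pow 2 2 hco
  -- pointwise bound
  have hpt : ∀ m ∈ Finset.Icc 1 N, ∀ n ∈ Finset.Icc 1 N,
      (∑ d ∈ (Nat.gcd m n).divisors, ‖a m‖ * ‖a n‖ * (d:ℝ) / Real.sqrt ((m:ℝ)*n))
      ≤ 3/2 * (‖a m‖^2 + ‖a n‖^2) * D m n
        + (‖a m‖^2 * (n:ℝ)⁻¹ + ‖a n‖^2 * (m:ℝ)⁻¹)/2 := by
    intro m hm n hn
    obtain ⟨hm1, hmN⟩ := Finset.mem_Icc.mp hm
    obtain ⟨hn1, hnN⟩ := Finset.mem_Icc.mp hn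
    by_cases hc : a m ≠ 0 ∧ a n ≠ 0 ∧ Nat.gcd m n ≠ 1
    · obtain ⟨ham, han, hg⟩ := hc
      obtain ⟨p, hp, -, hmp⟩ := hsupp m ham
      have hnp := key_prime p m n hp hmp han hg
      obtain ⟨k, hk2, hgcd⟩ := gcd_cases11 p m n hp hmp hnp
      have hsqrt0 : 0 < Real.sqrt ((m:ℝ)*n) := Real.sqrt_pos.mpr (by positivity)
      have hDone : D m n = 1 := by simp only [hDdef]; rw [if_pos ⟨ham, han, hg⟩]
      have key : (∑ d ∈ (Nat.gcd m n).divisors, ‖a m‖ * ‖a n‖ * (d:ℝ) / Real.sqrt ((m:ℝ)*n))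
          = (∑ d ∈ (Nat.gcd m n).divisors, (d:ℝ)) * (‖a m‖ * ‖a n‖ / Real.sqrt ((m:ℝ)*n)) := by
        rw [Finset.sum_mul]
        refine Finset.sum_congr rfl fun d _ => by ring
      rw [key]
      have h1 : (∑ d ∈ (Nat.gcd m n).divisors, (d:ℝ)) ≤ 3 * (Nat.gcd m n : ℝ) := by
        rw [hgcd]; exact_mod_cast sumdiv11 p k hp hk2
      have h2 : (Nat.gcd m n : ℝ) ≤ Real.sqrt ((m:ℝ)*n) := gcd_le_sqrt11 m n hm1 hn1
      have hfac0 : 0 ≤ ‖a m‖ * ‖a n‖ / Real.sqrt ((m:ℝ)*n) := by positivity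
      have step1 : (∑ d ∈ (Nat.gcd m n).divisors, (d:ℝ)) * (‖a m‖ * ‖a n‖ / Real.sqrt ((m:ℝ)*n))
          ≤ 3 * Real.sqrt ((m:ℝ)*n) * (‖a m‖ * ‖a n‖ / Real.sqrt ((m:ℝ)*n)) := by
        apply mul_le_mul_of_nonneg_right _ hfac0
        nlinarith
      have step2 : 3 * Real.sqrt ((m:ℝ)*n) * (‖a m‖ * ‖a n‖ / Real.sqrt ((m:ℝ)*n))
          = 3 * (‖a m‖ * ‖a n‖) := by
        field_simp
      have step3 : 3 * (‖a m‖ * ‖a n‖) ≤ 3/2 * (‖a m‖^2 + ‖a n‖^2) := by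
        nlinarith [two_mul_le_add_sq (‖a m‖) (‖a n‖)]
      have hsecond : 0 ≤ (‖a m‖^2 * (n:ℝ)⁻¹ + ‖a n‖^2 * (m:ℝ)⁻¹)/2 := by positivity
      calc (∑ d ∈ (Nat.gcd m n).divisors, (d:ℝ)) * (‖a m‖ * ‖a n‖ / Real.sqrt ((m:ℝ)*n))
          ≤ 3 * (‖a m‖ * ‖a n‖) := by rw [← step2]; exact step1
        _ ≤ 3/2 * (‖a m‖^2 + ‖a n‖^2) * D m n := by rw [hDone, mul_one]; exact step3
        _ ≤ _ := le_add_of_nonneg_right hsecond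
    · have hDzero : D m n = 0 := by simp only [hDdef]; rw [if_neg hc]
      rw [hDzero, mul_zero, zero_add]
      by_cases ham : a m = 0
      · simp only [ham, norm_zero, zero_mul, zero_div, Finset.sum_const_zero]
        positivity
      by_cases han : a n = 0
      · simp only [han, norm_zero, mul_zero, zero_mul, zero_div, Finset.sum_const_zero]
        positivity
      have hg : Nat.gcd m n = 1 := by
        by_contra hg; exact hc ⟨ham, han, hg⟩
      rw [hg]
      simp only [Nat.divisors_one, Finset.sum_singleton, Nat.cast_one]
      exact amgm11 m n hm1 hn1 _ _
  -- row sums of D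
  have hDsum : ∀ m, (∑ n ∈ Finset.Icc 1 N, D m n) ≤ 2 := by
    intro m
    by_cases ham : a m = 0
    · have hz : ∀ n ∈ Finset.Icc 1 N, D m n = 0 := by
        intro n _; simp only [hDdef]; rw [if_neg]; tauto
      rw [Finset.sum_congr rfl hz]; simp
    obtain ⟨p, hp, -, hmp⟩ := hsupp m ham
    calc (∑ n ∈ Finset.Icc 1 N, D m n)
        ≤ ∑ n ∈ Finset.Icc 1 N, (if n = p ∨ n = p^2 then (1:ℝ) else 0) := by
          refine Finset.sum_le_sum fun n _ => ?_
          simp only [hDdef]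
          by_cases hc : a m ≠ 0 ∧ a n ≠ 0 ∧ Nat.gcd m n ≠ 1
          · rw [if_pos hc, if_pos (key_prime p m n hp hmp hc.2.1 hc.2.2)]
          · rw [if_neg hc]
            split <;> norm_num
      _ ≤ 2 := by
          rw [Finset.sum_boole]
          have hsub : (Finset.Icc 1 N).filter (fun n => n = p ∨ n = p^2) ⊆ {p, p^2} := by
            intro x hx
            simp only [Finset.mem_filter] at hx
            simp only [Finset.mem_insert, Finset.mem_singleton]
            exact hx.2
          have hcard := Finset.card_le_card hsub
          have h2 : ({p, p^2} : Finset ℕ).card ≤ 2 := (Finset.card_insert_le _ _).trans (by simp)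
          exact_mod_cast le_trans hcard h2
  have hDsymm : ∀ m n, D m n = D n m := by
    intro m n
    simp only [hDdef]
    refine if_congr ⟨fun ⟨h1,h2,h3⟩ => ⟨h2,h1, by rwa [Nat.gcd_comm]⟩,
      fun ⟨h1,h2,h3⟩ => ⟨h2,h1, by rwa [Nat.gcd_comm]⟩⟩ rfl rfl
  -- A-part
  have hA : ∑ m ∈ Finset.Icc 1 N, ∑ n ∈ Finset.Icc 1 N,
      3/2 * (‖a m‖^2 + ‖a n‖^2) * D m n ≤ 6 * S := by
    have expand : ∀ m n : ℕ, 3/2 * (‖a m‖^2 + ‖a n‖^2) * D m n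
        = 3/2 * ‖a m‖^2 * D m n + 3/2 * ‖a n‖^2 * D m n := fun m n => by ring
    simp_rw [expand, Finset.sum_add_distrib]
    have hA1 : ∑ m ∈ Finset.Icc 1 N, ∑ n ∈ Finset.Icc 1 N, 3/2 * ‖a m‖^2 * D m n ≤ 3 * S := by
      calc ∑ m ∈ Finset.Icc 1 N, ∑ n ∈ Finset.Icc 1 N, 3/2 * ‖a m‖^2 * D m n
          = ∑ m ∈ Finset.Icc 1 N, 3/2 * ‖a m‖^2 * ∑ n ∈ Finset.Icc 1 N, D m n := by
            refine Finset.sum_congr rfl fun m _ => ?_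
            rw [Finset.mul_sum]
        _ ≤ ∑ m ∈ Finset.Icc 1 N, 3/2 * ‖a m‖^2 * 2 := by
            refine Finset.sum_le_sum fun m _ => ?_
            exact mul_le_mul_of_nonneg_left (hDsum m) (by positivity)
        _ = 3 * S := by rw [hSdef, Finset.mul_sum]; refine Finset.sum_congr rfl fun m _ => by ring
    have hA2 : ∑ m ∈ Finset.Icc 1 N, ∑ n ∈ Finset.Icc 1 N, 3/2 * ‖a n‖^2 * D m n ≤ 3 * S := by
      rw [Finset.sum_comm]
      calc ∑ n ∈ Finset.Icc 1 N, ∑ m ∈ Finset.Icc 1 N, 3/2 * ‖a n‖^2 * D m n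
          = ∑ n ∈ Finset.Icc 1 N, 3/2 * ‖a n‖^2 * ∑ m ∈ Finset.Icc 1 N, D n m := by
            refine Finset.sum_congr rfl fun n _ => ?_
            rw [Finset.mul_sum]
            exact Finset.sum_congr rfl fun m _ => by rw [hDsymm m n]
        _ ≤ ∑ n ∈ Finset.Icc 1 N, 3/2 * ‖a n‖^2 * 2 := by
            refine Finset.sum_le_sum fun n _ => ?_
            exact mul_le_mul_of_nonneg_left (hDsum n) (by positivity)
        _ = 3 * S := by rw [hSdef, Finset.mul_sum]; refine Finset.sum_congr rfl fun n _ => by ring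
    linarith
  -- B-part
  have hB : ∑ m ∈ Finset.Icc 1 N, ∑ n ∈ Finset.Icc 1 N,
      (‖a m‖^2 * (n:ℝ)⁻¹ + ‖a n‖^2 * (m:ℝ)⁻¹)/2 = S * H := by
    have e1 : ∑ m ∈ Finset.Icc 1 N, ∑ n ∈ Finset.Icc 1 N, ‖a m‖^2 * (n:ℝ)⁻¹ = S * H :=
      (Finset.sum_mul_sum _ _ _ _).symm
    have e2 : ∑ m ∈ Finset.Icc 1 N, ∑ n ∈ Finset.Icc 1 N, ‖a n‖^2 * (m:ℝ)⁻¹ = H * S := by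
      have hc : ∀ m n : ℕ, ‖a n‖^2 * (m:ℝ)⁻¹ = (m:ℝ)⁻¹ * ‖a n‖^2 := fun _ _ => mul_comm _ _
      simp_rw [hc]
      exact (Finset.sum_mul_sum _ _ _ _).symm
    have e3 : ∀ m n : ℕ, (‖a m‖^2 * (n:ℝ)⁻¹ + ‖a n‖^2 * (m:ℝ)⁻¹)/2
        = ‖a m‖^2 * (n:ℝ)⁻¹ * (1/2) + ‖a n‖^2 * (m:ℝ)⁻¹ * (1/2) := fun _ _ => by ring
    simp_rw [e3, Finset.sum_add_distrib, ← Finset.sum_mul]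
    rw [← Finset.mul_sum, ← hSdef, ← hHdef, e1]; ring
  -- harmonic bound
  have hH : H ≤ 1 + Real.log N := by
    have h1 := harmonic_le_one_add_log N
    have h2 : ((harmonic N : ℚ) : ℝ) = H := by
      rw [harmonic_eq_sum_Icc, hHdef]; push_cast; rfl
    linarith [h2 ▸ h1]
  -- log bound
  have hNpos : (0:ℝ) < N := by linarith
  have hlog : Real.log N ≤ ε⁻¹ * (N:ℝ)^ε := by
    have h3 : Real.log ((N:ℝ)^ε) ≤ (N:ℝ)^ε - 1 :=
      Real.log_le_sub_one_of_pos (Real.rpow_pos_of_pos hNpos ε)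
    rw [Real.log_rpow hNpos] at h3
    have h4 : ε * Real.log N ≤ (N:ℝ)^ε := by linarith
    calc Real.log N = (ε * Real.log N)/ε := by field_simp
      _ ≤ (N:ℝ)^ε / ε := by gcongr
      _ = ε⁻¹ * (N:ℝ)^ε := by ring
  have hone : 1 ≤ (N:ℝ)^ε := by
    calc (1:ℝ) = 1 ^ ε := (Real.one_rpow ε).symm
      _ ≤ (N:ℝ)^ε := Real.rpow_le_rpow zero_le_one hN1 hε.le
  -- assemble
  calc ∑ m ∈ Finset.Icc 1 N, ∑ n ∈ Finset.Icc 1 N,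
        ∑ d ∈ (Nat.gcd m n).divisors, ‖a m‖ * ‖a n‖ * (d:ℝ) / Real.sqrt ((m:ℝ)*n)
      ≤ ∑ m ∈ Finset.Icc 1 N, ∑ n ∈ Finset.Icc 1 N,
        (3/2 * (‖a m‖^2 + ‖a n‖^2) * D m n
          + (‖a m‖^2 * (n:ℝ)⁻¹ + ‖a n‖^2 * (m:ℝ)⁻¹)/2) :=
        Finset.sum_le_sum fun m hm => Finset.sum_le_sum fun n hn => hpt m hm n hn
    _ = (∑ m ∈ Finset.Icc 1 N, ∑ n ∈ Finset.Icc 1 N, 3/2 * (‖a m‖^2 + ‖a n‖^2) * D m n)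
        + ∑ m ∈ Finset.Icc 1 N, ∑ n ∈ Finset.Icc 1 N,
          (‖a m‖^2 * (n:ℝ)⁻¹ + ‖a n‖^2 * (m:ℝ)⁻¹)/2 := by
        rw [← Finset.sum_add_distrib]
        exact Finset.sum_congr rfl fun m _ => by rw [← Finset.sum_add_distrib]
    _ ≤ 6 * S + S * H := by rw [hB]; linarith
    _ ≤ (7 + 1/ε) * (N:ℝ)^ε * S := by
        have k1 : S * H ≤ S * (1 + Real.log N) := mul_le_mul_of_nonneg_left hH hS0
        have k2 : S * Real.log N ≤ S * (ε⁻¹ * (N:ℝ)^ε) := mul_le_mul_of_nonneg_left hlog hS0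
        have k3 : S * 1 ≤ S * ((N:ℝ)^ε) := mul_le_mul_of_nonneg_left hone hS0
        have : 1/ε = ε⁻¹ := one_div ε
        nlinarith [k1, k2, k3, hS0]
end
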